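/- Let b, B : U → ℝ be smooth and suppose Δ = b_x b_y − b·b_{xy} vanishes nowhere on U. If s₁ : I → ℝ and s₂ : J → ℝ are twice differentiable and satisfy b(x,y)·s₁′(x) + s₂′(y) = B(x,y) for all (x,y) ∈ U, then at every (x,y) ∈ U: s₁′(x) = (b_y B_x − b B_{xy})/Δ and s₁″(x) = (b_x B_{xy} − b_{xy} B_x)/Δ. Consequently the function (b_y B_x − b B_{xy})/Δ has vanishing partial derivative with respect to y on U (condition J₁ = 0), and its partial derivative with respect to x equals (b_x B_{xy} − b_{xy} B_x)/Δ on U (condition J₂ = 0). -/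

import Mathlib

open Set

/-- Partial derivative with respect to the first variable. -/
noncomputable def pdx (g : ℝ × ℝ → ℝ) (p : ℝ × ℝ) : ℝ :=
  deriv (fun x => g (x, p.2)) p.1

/-- Partial derivative with respect to the second variable. -/
noncomputable def pdy (g : ℝ × ℝ → ℝ) (p : ℝ × ℝ) : ℝ :=
  deriv (fun y => g (p.1, y)) p.2

/-!
Differentiating `b · s₁'(x) + s₂'(y) = B` once in `x` and then in `y` kills `s₂` and gives the
linear system `b_x s₁' + b s₁'' = B_x`, `b_{xy} s₁' + b_y s₁'' = B_{xy}` in the unknowns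
`s₁'(x)`, `s₁''(x)`, whose determinant is `Δ`. Cramer's rule expresses `s₁'` and `s₁''` through
`b`, `B`; since `s₁'(x)` does not depend on `y` and differentiates in `x` to `s₁''(x)`, the same
holds for its Cramer expression, which is `J₁ = J₂ = 0`.
-/

section PartialDeriv

variable {g : ℝ × ℝ → ℝ} {p : ℝ × ℝ}

lemma DifferentiableAt.hasDerivAt_pdx (hg : DifferentiableAt ℝ g p) :
    HasDerivAt (fun x => g (x, p.2)) (pdx g p) p.1 :=
  (hg.comp p.1 (differentiableAt_id.prodMk (differentiableAt_const _))).hasDerivAt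

lemma DifferentiableAt.hasDerivAt_pdy (hg : DifferentiableAt ℝ g p) :
    HasDerivAt (fun y => g (p.1, y)) (pdy g p) p.2 :=
  (hg.comp p.2 ((differentiableAt_const _).prodMk differentiableAt_id)).hasDerivAt

lemma DifferentiableAt.pdx_eq_fderiv (hg : DifferentiableAt ℝ g p) :
    pdx g p = fderiv ℝ g p (1, 0) :=
  (hg.hasFDerivAt.comp_hasDerivAt p.1
    ((hasDerivAt_id p.1).prodMk (hasDerivAt_const p.1 p.2))).deriv

lemma ContDiffOn.pdx {n : WithTop ℕ∞} {U : Set (ℝ × ℝ)} (hU : IsOpen U)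
    (hg : ContDiffOn ℝ (n + 1) g U) : ContDiffOn ℝ n (pdx g) U := by
  refine ((hg.fderiv_of_isOpen hU le_rfl).clm_apply
    (contDiffOn_const (c := ((1 : ℝ), (0 : ℝ))))).congr fun q hq => ?_
  exact ((hg.contDiffAt (hU.mem_nhds hq)).differentiableAt (by simp)).pdx_eq_fderiv

lemma pdx_eq_deriv_of_eqOn {f : ℝ → ℝ} {I : Set ℝ} (hI : IsOpen I) (hp : p.1 ∈ I)
    (h : EqOn (fun x => g (x, p.2)) f I) : pdx g p = deriv f p.1 :=
  (h.eventuallyEq_of_mem (hI.mem_nhds hp)).deriv_eq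

lemma pdy_eq_deriv_of_eqOn {f : ℝ → ℝ} {J : Set ℝ} (hJ : IsOpen J) (hp : p.2 ∈ J)
    (h : EqOn (fun y => g (p.1, y)) f J) : pdy g p = deriv f p.2 :=
  (h.eventuallyEq_of_mem (hJ.mem_nhds hp)).deriv_eq

end PartialDeriv

lemma cramer_two_by_two {K : Type*} [Field K] {a b c d e f u v : K} (hΔ : a * d - b * c ≠ 0)
    (h₁ : a * u + b * v = e) (h₂ : c * u + d * v = f) :
    u = (d * e - b * f) / (a * d - b * c) ∧ v = (a * f - c * e) / (a * d - b * c) := by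
  constructor <;> rw [eq_div_iff hΔ]
  · linear_combination d * h₁ - b * h₂
  · linear_combination a * h₂ - c * h₁

section SeparatedEquation

variable {I J : Set ℝ} {b B : ℝ × ℝ → ℝ} {p : ℝ × ℝ}

lemma pdx_eq_of_mul_add_eq (hI : IsOpen I) {f g : ℝ → ℝ}
    (heq : ∀ q ∈ I ×ˢ J, b q * f q.1 + g q.2 = B q) (hp : p ∈ I ×ˢ J)
    (hb : DifferentiableAt ℝ b p) (hf : DifferentiableAt ℝ f p.1) :
    pdx b p * f p.1 + b p * deriv f p.1 = pdx B p := by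
  have hderiv := (hb.hasDerivAt_pdx.mul hf.hasDerivAt).add_const (g p.2)
  refine (hderiv.deriv.symm.trans (pdx_eq_deriv_of_eqOn hI hp.1 fun x hx => ?_).symm)
  exact (heq (x, p.2) ⟨hx, hp.2⟩).symm

lemma pdy_eq_of_mul_add_mul_eq (hJ : IsOpen J) {c d : ℝ × ℝ → ℝ} {u v : ℝ → ℝ}
    (heq : ∀ q ∈ I ×ˢ J, c q * u q.1 + d q * v q.1 = B q) (hp : p ∈ I ×ˢ J)
    (hc : DifferentiableAt ℝ c p) (hd : DifferentiableAt ℝ d p) :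
    pdy c p * u p.1 + pdy d p * v p.1 = pdy B p := by
  have hderiv := (hc.hasDerivAt_pdy.mul_const (u p.1)).add (hd.hasDerivAt_pdy.mul_const (v p.1))
  refine (hderiv.deriv.symm.trans (pdy_eq_deriv_of_eqOn hJ hp.2 fun y hy => ?_).symm)
  exact (heq (p.1, y) ⟨hp.1, hy⟩).symm

end SeparatedEquation

theorem samuelson_cramer_conditions_general
    (I J : Set ℝ) (hI : IsOpen I) (hJ : IsOpen J)
    (b B : ℝ × ℝ → ℝ)
    (hb : ContDiffOn ℝ (⊤ : ℕ∞) b (I ×ˢ J))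
    (hΔ : ∀ p ∈ I ×ˢ J, pdx b p * pdy b p - b p * pdy (pdx b) p ≠ 0)
    (s₁ s₂ : ℝ → ℝ)
    (hs₁' : DifferentiableOn ℝ (deriv s₁) I)
    (heq : ∀ p ∈ I ×ˢ J, b p * deriv s₁ p.1 + deriv s₂ p.2 = B p) :
    ∀ p ∈ I ×ˢ J,
      deriv s₁ p.1 = (pdy b p * pdx B p - b p * pdy (pdx B) p)
          / (pdx b p * pdy b p - b p * pdy (pdx b) p) ∧
      deriv (deriv s₁) p.1 = (pdx b p * pdy (pdx B) p - pdy (pdx b) p * pdx B p)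
          / (pdx b p * pdy b p - b p * pdy (pdx b) p) ∧
      pdy (fun q => (pdy b q * pdx B q - b q * pdy (pdx B) q)
          / (pdx b q * pdy b q - b q * pdy (pdx b) q)) p = 0 ∧
      pdx (fun q => (pdy b q * pdx B q - b q * pdy (pdx B) q)
          / (pdx b q * pdy b q - b q * pdy (pdx b) q)) p
        = (pdx b p * pdy (pdx B) p - pdy (pdx b) p * pdx B p)
          / (pdx b p * pdy b p - b p * pdy (pdx b) p) := by
  have hU : IsOpen (I ×ˢ J) := hI.prod hJ
  have hb₂ : ContDiffOn ℝ (1 + 1) b (I ×ˢ J) := hb.of_le (WithTop.coe_le_coe.mpr le_top)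
  have hdiff : ∀ {g : ℝ × ℝ → ℝ}, ContDiffOn ℝ 1 g (I ×ˢ J) →
      ∀ p ∈ I ×ˢ J, DifferentiableAt ℝ g p :=
    fun hg p hp => (hg.contDiffAt (hU.mem_nhds hp)).differentiableAt one_ne_zero
  have hx : ∀ p ∈ I ×ˢ J, pdx b p * deriv s₁ p.1 + b p * deriv (deriv s₁) p.1 = pdx B p :=
    fun p hp => pdx_eq_of_mul_add_eq hI heq hp (hdiff (hb₂.of_le le_add_self) p hp)
      (hs₁'.differentiableAt (hI.mem_nhds hp.1))
  have hxy : ∀ p ∈ I ×ˢ J,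
      pdy (pdx b) p * deriv s₁ p.1 + pdy b p * deriv (deriv s₁) p.1 = pdy (pdx B) p :=
    fun p hp => pdy_eq_of_mul_add_mul_eq hJ hx hp (hdiff (hb₂.pdx hU) p hp)
      (hdiff (hb₂.of_le le_add_self) p hp)
  have hcramer : ∀ p ∈ I ×ˢ J, _ := fun p hp => cramer_two_by_two (hΔ p hp) (hx p hp) (hxy p hp)
  intro p hp
  refine ⟨(hcramer p hp).1, (hcramer p hp).2, ?_, ?_⟩
  · rw [pdy_eq_deriv_of_eqOn hJ hp.2 (f := fun _ => deriv s₁ p.1)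
      fun y hy => ((hcramer (p.1, y) ⟨hp.1, hy⟩).1).symm, deriv_const]
  · rw [pdx_eq_deriv_of_eqOn hI hp.1 (f := deriv s₁)
      fun x hx => ((hcramer (x, p.2) ⟨hx, hp.2⟩).1).symm]
    exact (hcramer p hp).2

/-- Cramer's rule for the equation `b·s₁'(x) + s₂'(y) = B(x,y)`:
if `Δ = b_x b_y - b b_{xy}` vanishes nowhere on `U` and twice differentiable
`s₁, s₂` solve the equation on `U`, then `s₁' = (b_y B_x - b B_{xy})/Δ` and
`s₁'' = (b_x B_{xy} - b_{xy} B_x)/Δ` on `U`; consequently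
`(b_y B_x - b B_{xy})/Δ` has vanishing `y`-derivative on `U` (condition `J₁ = 0`)
and its `x`-derivative equals `(b_x B_{xy} - b_{xy} B_x)/Δ` (condition `J₂ = 0`). -/
theorem samuelson_cramer_conditions
    (I J : Set ℝ) (hI : IsOpen I) (hJ : IsOpen J)
    (hIc : I.OrdConnected) (hJc : J.OrdConnected)
    (b B : ℝ × ℝ → ℝ)
    (hb : ContDiffOn ℝ (⊤ : ℕ∞) b (I ×ˢ J)) (hB : ContDiffOn ℝ (⊤ : ℕ∞) B (I ×ˢ J))
    (hΔ : ∀ p ∈ I ×ˢ J, pdx b p * pdy b p - b p * pdy (pdx b) p ≠ 0)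
    (s₁ s₂ : ℝ → ℝ)
    (hs₁ : DifferentiableOn ℝ s₁ I) (hs₁' : DifferentiableOn ℝ (deriv s₁) I)
    (hs₂ : DifferentiableOn ℝ s₂ J) (hs₂' : DifferentiableOn ℝ (deriv s₂) J)
    (heq : ∀ p ∈ I ×ˢ J, b p * deriv s₁ p.1 + deriv s₂ p.2 = B p) :
    ∀ p ∈ I ×ˢ J,
      deriv s₁ p.1 = (pdy b p * pdx B p - b p * pdy (pdx B) p)
          / (pdx b p * pdy b p - b p * pdy (pdx b) p) ∧
      deriv (deriv s₁) p.1 = (pdx b p * pdy (pdx B) p - pdy (pdx b) p * pdx B p)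
          / (pdx b p * pdy b p - b p * pdy (pdx b) p) ∧
      pdy (fun q => (pdy b q * pdx B q - b q * pdy (pdx B) q)
          / (pdx b q * pdy b q - b q * pdy (pdx b) q)) p = 0 ∧
      pdx (fun q => (pdy b q * pdx B q - b q * pdy (pdx B) q)
          / (pdx b q * pdy b q - b q * pdy (pdx b) q)) p
        = (pdx b p * pdy (pdx B) p - pdy (pdx b) p * pdx B p)
          / (pdx b p * pdy b p - b p * pdy (pdx b) p) :=
  samuelson_cramer_conditions_general I J hI hJ b B hb hΔ s₁ s₂ hs₁' heq
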